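/- Let G be the group generated by h(z) = λz and f(z) = λ(z−a)+a on ℂ with a ≠ 0 and λ ∈ ℂ∖ℝ. If the set G₁(0) of translation vectors occurring in G is discrete, then it contains a lattice ℤa₁ + ℤa₂ with (a₁, a₂) an ℝ-basis of ℂ, and hence G₁(0) itself is a full-rank lattice. -/

import Mathlib

/-!
Since `f` and `h` have the same linear part `z ↦ λz`, the element `f ∘ h⁻¹` is the translation
by `(1 - λ)a`, and conjugating it by `h` gives the translation by `λ(1 - λ)a`. These two vectors
are `ℝ`-independent because `λ ∉ ℝ`, so the translation vectors form a discrete subgroup of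
`ℂ ≅ ℝ²` spanning `ℂ` over `ℝ`, i.e. a full-rank lattice, which has a `ℤ`-basis of two vectors.
-/

open Module Submodule

section translations

variable {k V : Type*} [Ring k] [AddCommGroup V] [Module k V]

def translationVectors (G : Subgroup (V ≃ᵃ[k] V)) : AddSubgroup V where
  carrier := {c | ∃ T ∈ G, ∀ z, T z = z + c}
  zero_mem' := ⟨1, G.one_mem, fun z => by simp⟩
  add_mem' := by
    rintro c d ⟨T, hT, hTc⟩ ⟨U, hU, hUd⟩
    exact ⟨T * U, G.mul_mem hT hU, fun z => by
      simp [AffineEquiv.mul_def, hTc, hUd, add_assoc, add_comm d]⟩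
  neg_mem' := by
    rintro c ⟨T, hT, hTc⟩
    refine ⟨T⁻¹, G.inv_mem hT, fun z => T.injective ?_⟩
    rw [AffineEquiv.inv_def, AffineEquiv.apply_symm_apply, hTc, neg_add_cancel_right]

variable {G : Subgroup (V ≃ᵃ[k] V)}

theorem mem_translationVectors_of_sub_eq {g₁ g₂ : V ≃ᵃ[k] V} (hg₁ : g₁ ∈ G) (hg₂ : g₂ ∈ G)
    {c : V} (hc : ∀ z, g₁ z - g₂ z = c) : c ∈ translationVectors G :=
  ⟨g₁ * g₂⁻¹, G.mul_mem hg₁ (G.inv_mem hg₂), fun z => by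
    rw [← hc (g₂⁻¹ z), AffineEquiv.mul_def, AffineEquiv.trans_apply, AffineEquiv.inv_def,
      AffineEquiv.apply_symm_apply, add_sub_cancel]⟩

theorem linear_mem_translationVectors {g : V ≃ᵃ[k] V} (hg : g ∈ G) {c : V}
    (hc : c ∈ translationVectors G) : g.linear c ∈ translationVectors G := by
  obtain ⟨T, hT, hTc⟩ := hc
  refine ⟨g * T * g⁻¹, G.mul_mem (G.mul_mem hg hT) (G.inv_mem hg), fun z => ?_⟩
  have := g.map_vadd (g⁻¹ z) c
  simp only [vadd_eq_add] at this
  rw [AffineEquiv.mul_def, AffineEquiv.mul_def, AffineEquiv.trans_apply,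
    AffineEquiv.trans_apply, hTc, add_comm, this, AffineEquiv.inv_def,
    AffineEquiv.apply_symm_apply, add_comm]

end translations

theorem Complex.linearIndependent_pair_mul {c lam : ℂ} (hc : c ≠ 0) (hlam : lam.im ≠ 0) :
    LinearIndependent ℝ ![c, lam * c] := by
  rw [LinearIndependent.pair_iff]
  intro s t hst
  have hsum : (s : ℂ) + t * lam = 0 := by
    refine (mul_eq_zero.1 ?_).resolve_right hc
    rw [← hst]; simp only [Complex.real_smul]; ring
  have ht : t = 0 := by
    simpa [hlam] using congrArg Complex.im hsum
  exact ⟨by simpa [ht] using congrArg Complex.re hsum, ht⟩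

theorem AddSubgroup.exists_eq_zspan_pair_of_discreteTopology {E : Type*} [NormedAddCommGroup E]
    [NormedSpace ℝ E] [FiniteDimensional ℝ E] (hE : finrank ℝ E = 2) (L : AddSubgroup E)
    [DiscreteTopology L] {u v : E} (hu : u ∈ L) (hv : v ∈ L) (huv : LinearIndependent ℝ ![u, v]) :
    ∃ b₁ b₂ : E, LinearIndependent ℝ ![b₁, b₂] ∧
      (L : Set E) = {w | ∃ n m : ℤ, w = n • b₁ + m • b₂} := by
  let M := L.toIntSubmodule
  have : DiscreteTopology M := ‹_›
  have : IsZLattice ℝ M := ⟨by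
    rw [eq_top_iff, ← huv.span_eq_top_of_card_eq_finrank' (by simp [hE]),
      Matrix.range_cons_cons_empty]
    exact span_mono (Set.insert_subset hu (Set.singleton_subset_iff.2 hv))⟩
  let b : Basis (Fin 2) ℤ M := Module.finBasisOfFinrankEq ℤ M (by rw [ZLattice.rank ℝ M, hE])
  have hb : ⇑(b.ofZLatticeBasis ℝ M) = ![(b 0 : E), b 1] := by
    ext i; fin_cases i <;> simp
  refine ⟨b 0, b 1, hb ▸ (b.ofZLatticeBasis ℝ M).linearIndependent, ?_⟩
  ext w
  have hspan := b.ofZLatticeBasis_span ℝ M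
  rw [hb, Matrix.range_cons_cons_empty] at hspan
  change w ∈ M ↔ _
  simp only [← hspan, mem_span_pair, Set.mem_ofPred_eq, eq_comm]

/-- For G generated by h(z) = λz and f(z) = λ(z−a)+a on ℂ with a ≠ 0, λ ∉ ℝ:
if the set G₁(0) of translation vectors occurring in G is discrete, then it contains
a full-rank lattice ℤa₁ + ℤa₂ and is itself a full-rank lattice. -/
theorem stmt16 (lam : ℂ) (hlam : lam.im ≠ 0) (a : ℂ) (ha : a ≠ 0)
    (h f : ℂ ≃ᵃ[ℂ] ℂ) (hh : ∀ z, h z = lam * z) (hf : ∀ z, f z = lam * (z - a) + a)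
    (S : Set ℂ) (hS : S = {c | ∃ T ∈ Subgroup.closure {h, f}, ∀ z : ℂ, T z = z + c})
    (hdisc : DiscreteTopology S) :
    (∃ a₁ a₂ : ℂ, LinearIndependent ℝ ![a₁, a₂] ∧
      {w : ℂ | ∃ n m : ℤ, w = n • a₁ + m • a₂} ⊆ S) ∧
    (∃ b₁ b₂ : ℂ, LinearIndependent ℝ ![b₁, b₂] ∧
      S = {w : ℂ | ∃ n m : ℤ, w = n • b₁ + m • b₂}) := by
  set G := Subgroup.closure {h, f}
  have hSG : S = translationVectors G := hS
  subst hSG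
  have hG : h ∈ G := Subgroup.subset_closure (by simp)
  have fG : f ∈ G := Subgroup.subset_closure (by simp)
  have h_linear (x : ℂ) : h.linear x = lam * x := by
    simpa [hh] using h.toAffineMap.linearMap_vsub x 0
  have hc : (1 - lam) * a ∈ translationVectors G :=
    mem_translationVectors_of_sub_eq fG hG fun z => by rw [hf, hh]; ring
  have hlc : lam * ((1 - lam) * a) ∈ translationVectors G :=
    h_linear _ ▸ linear_mem_translationVectors hG hc
  have hlam1 : 1 - lam ≠ 0 := sub_ne_zero.2 fun h1 => hlam (by simp [← h1])
  have hind := Complex.linearIndependent_pair_mul (mul_ne_zero hlam1 ha) hlam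
  refine ⟨⟨_, _, hind, ?_⟩, (translationVectors G).exists_eq_zspan_pair_of_discreteTopology
    Complex.finrank_real_complex hc hlc hind⟩
  rintro _ ⟨n, m, rfl⟩
  exact add_mem (zsmul_mem hc n) (zsmul_mem hlc m)
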